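/- arXiv:2512.15664 — 3 statements merged into one kernel-verified Lean document; each statement's English description precedes it below -/
import Mathlib

section
/- For every real v > 0, one has the identity ∫₀^v ρ · sinh(ρ) · (sinh²(v/2) − sinh²(ρ/2))^{−1/2} dρ = 4 ∫₀^v (sinh²(v/2) − sinh²(ρ/2))^{1/2} dρ. -/
/-!
The derivative of `F ρ = √(sinh²(v/2) − sinh²(ρ/2))` is `−sinh ρ / (4 F ρ)`, so
`G ρ = 4 ∫₀^ρ F − 4 ρ F ρ` has derivative `ρ sinh ρ / F ρ`, the left-hand integrand. This derivative
is nonnegative, hence integrable, and the fundamental theorem of calculus gives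
`∫₀^v ρ sinh ρ / F ρ = G v − G 0 = 4 ∫₀^v F`, since `F v = 0`.
-/

open MeasureTheory Set Real

theorem integral_Ioo_eq_sub_of_hasDerivAt_of_nonneg {g g' : ℝ → ℝ} {a b : ℝ} (hab : a ≤ b)
    (hcont : ContinuousOn g (Icc a b)) (hderiv : ∀ x ∈ Ioo a b, HasDerivAt g (g' x) x)
    (hpos : ∀ x ∈ Ioo a b, 0 ≤ g' x) :
    ∫ x in Ioo a b, g' x = g b - g a := by
  rw [← integral_Ioc_eq_integral_Ioo, ← intervalIntegral.integral_of_le hab]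
  exact intervalIntegral.integral_eq_sub_of_hasDerivAt_of_le hab hcont hderiv
    ((intervalIntegrable_iff_integrableOn_Ioc_of_le hab).2
      (intervalIntegral.integrableOn_deriv_of_nonneg hcont hderiv hpos))

theorem sinh_sq_lt_sinh_sq_iff {x y : ℝ} : sinh x ^ 2 < sinh y ^ 2 ↔ |x| < |y| := by
  rw [sq_lt_sq, abs_sinh, abs_sinh, sinh_lt_sinh]

theorem hasDerivAt_sqrt_sub_sinh_half_sq {c ρ : ℝ} (h : c - sinh (ρ / 2) ^ 2 ≠ 0) :
    HasDerivAt (fun ρ => √(c - sinh (ρ / 2) ^ 2))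
      (-sinh ρ / (4 * √(c - sinh (ρ / 2) ^ 2))) ρ := by
  have hsinh : HasDerivAt (fun ρ => sinh (ρ / 2)) (cosh (ρ / 2) * (1 / 2)) ρ :=
    ((hasDerivAt_id' ρ).div_const 2).sinh
  convert ((hsinh.fun_pow 2).const_sub c).sqrt h using 1
  rw [show sinh ρ = sinh (2 * (ρ / 2)) by ring_nf, sinh_two_mul]
  push_cast
  ring

theorem hasDerivAt_integral_sub_mul_sqrt_sub_sinh_half_sq {c ρ : ℝ}
    (h : 0 < c - sinh (ρ / 2) ^ 2) :
    HasDerivAt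
      (fun ρ =>
        4 * (∫ t in (0 : ℝ)..ρ, √(c - sinh (t / 2) ^ 2)) - 4 * ρ * √(c - sinh (ρ / 2) ^ 2))
      (ρ * sinh ρ * (√(c - sinh (ρ / 2) ^ 2))⁻¹) ρ := by
  have hF : Continuous fun t => √(c - sinh (t / 2) ^ 2) := by fun_prop
  have hFρ : √(c - sinh (ρ / 2) ^ 2) ≠ 0 := (sqrt_pos.2 h).ne'
  refine (((hF.integral_hasStrictDerivAt 0 ρ).hasDerivAt.const_mul 4).fun_sub
    (((hasDerivAt_id' ρ).const_mul 4).fun_mul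
      (hasDerivAt_sqrt_sub_sinh_half_sq h.ne'))).congr_deriv ?_
  field_simp
  ring

/-- For every real `v > 0`,
`∫₀^v ρ sinh ρ (sinh²(v/2) − sinh²(ρ/2))^{−1/2} dρ = 4 ∫₀^v (sinh²(v/2) − sinh²(ρ/2))^{1/2} dρ`. -/
theorem stmt1 (v : ℝ) (hv : 0 < v) :
    (∫ ρ in Set.Ioo (0:ℝ) v,
        ρ * Real.sinh ρ * (Real.sqrt (Real.sinh (v / 2) ^ 2 - Real.sinh (ρ / 2) ^ 2))⁻¹) =
      4 * ∫ ρ in Set.Ioo (0:ℝ) v, Real.sqrt (Real.sinh (v / 2) ^ 2 - Real.sinh (ρ / 2) ^ 2) := by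
  have hgap : ∀ ρ ∈ Ioo 0 v, 0 < sinh (v / 2) ^ 2 - sinh (ρ / 2) ^ 2 := fun ρ hρ => by
    rw [sub_pos, sinh_sq_lt_sinh_sq_iff, abs_of_pos (half_pos hρ.1), abs_of_pos (half_pos hv)]
    linarith [hρ.2]
  have hnonneg : ∀ ρ ∈ Ioo 0 v, 0 ≤ ρ * sinh ρ * (√(sinh (v / 2) ^ 2 - sinh (ρ / 2) ^ 2))⁻¹ :=
    fun ρ ⟨hρ, _⟩ => by
      have := sinh_pos_iff.2 hρ
      positivity
  rw [integral_Ioo_eq_sub_of_hasDerivAt_of_nonneg hv.le (by fun_prop)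
      (fun ρ hρ => hasDerivAt_integral_sub_mul_sqrt_sub_sinh_half_sq (hgap ρ hρ)) hnonneg,
    intervalIntegral.integral_of_le hv.le, integral_Ioc_eq_integral_Ioo]
  simp
end

section
/- For T ≥ 1 define k_T : (0,∞) → [0,∞] by k_T(u) := (T³ e^{−1/(8T²)} / (4 √2 π^{3/2})) · ∫_{2 arsinh(√u)}^{∞} v e^{−T² v²/2} (sinh²(v/2) − u)^{−1/2} dv. Then k_T(u) ≥ 0 for all u > 0, and there exists a constant C > 0 such that for all T ≥ 1, ∫₀^∞ k_T(u) · arsinh(√u) du ≤ C / T. -/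
open MeasureTheory
open scoped ENNReal

/-- The inverse Selberg–Harish-Chandra transform of the Gaussian test function
`h(t) = e^{−(t² + 1/4)/(2T²)}`, written as an explicit integral:
`k_T(u) = (T³ e^{−1/(8T²)} / (4 √2 π^{3/2})) ∫_{2 arsinh √u}^∞ v e^{−T²v²/2} (sinh²(v/2) − u)^{−1/2} dv`. -/
noncomputable def kT (T u : ℝ) : ℝ≥0∞ :=
  ENNReal.ofReal
      (T ^ 3 * Real.exp (-(1 / (8 * T ^ 2))) / (4 * Real.sqrt 2 * Real.pi ^ ((3:ℝ) / 2))) *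
    ∫⁻ v in Set.Ioi (2 * Real.arsinh (Real.sqrt u)),
      ENNReal.ofReal
        (v * Real.exp (-(T ^ 2 * v ^ 2 / 2)) * (Real.sqrt (Real.sinh (v / 2) ^ 2 - u))⁻¹)

/-!
On the domain of the inner integral `arsinh √u < v / 2`, so after exchanging the order of
integration (Tonelli) the left-hand side is at most
`c_T ∫₀^∞ (v / 2) v e^{-T²v²/2} (∫₀^{sinh²(v/2)} (sinh²(v/2) - u)^{-1/2} du) dv
  = c_T ∫₀^∞ v² sinh(v/2) e^{-T²v²/2} dv`.
Since `sinh x ≤ x cosh x ≤ x e^{x²/2}`, the last integral is at most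
`½ ∫₀^∞ v³ e^{-T²v²/4} dv = 4 / T⁴`, while the prefactor `c_T` of `k_T` is `O(T³)`.
-/

open Real Set

theorem Real.sinh_le_mul_cosh {x : ℝ} (hx : 0 ≤ x) : sinh x ≤ x * cosh x := by
  refine hasSum_le (fun n => ?_) (hasSum_sinh x) ((hasSum_cosh x).mul_left x)
  rw [pow_succ', mul_div_assoc]
  gcongr
  omega

theorem Real.two_mul_arsinh_sqrt_lt_iff {u v : ℝ} :
    2 * arsinh √u < v ↔ 0 < v ∧ u < sinh (v / 2) ^ 2 := by
  calc 2 * arsinh √u < v ↔ arsinh √u < v / 2 := by constructor <;> intro <;> linarith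
    _ ↔ √u < sinh (v / 2) := by rw [← sinh_lt_sinh, sinh_arsinh]
    _ ↔ 0 < v ∧ u < sinh (v / 2) ^ 2 := by
      constructor
      · intro h
        have hpos : 0 < sinh (v / 2) := (sqrt_nonneg u).trans_lt h
        exact ⟨by linarith [sinh_pos_iff.1 hpos], (sqrt_lt' hpos).1 h⟩
      · rintro ⟨hv, h⟩
        exact (sqrt_lt' (sinh_pos_iff.2 (half_pos hv))).2 h

theorem lintegral_Ioo_inv_sqrt_sub {s : ℝ} (hs : 0 ≤ s) :
    ∫⁻ u in Ioo 0 s, ENNReal.ofReal (√(s - u))⁻¹ = ENNReal.ofReal (2 * √s) := by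
  have hint : IntegrableOn (fun u => (s - u) ^ (-(1 / 2) : ℝ)) (Ioo 0 s) := by
    rw [← intervalIntegrable_iff_integrableOn_Ioo_of_le hs]
    simpa using ((intervalIntegral.intervalIntegrable_rpow' (a := 0) (b := s)
      (r := -(1 / 2)) (by norm_num)).comp_sub_left s).symm
  have hrpow : ∀ u ∈ Ioo 0 s, (√(s - u))⁻¹ = (s - u) ^ (-(1 / 2) : ℝ) := fun u hu => by
    rw [rpow_neg (by linarith [hu.2]), sqrt_eq_rpow]
  rw [setLIntegral_congr_fun measurableSet_Ioo (fun u hu => by rw [hrpow u hu]),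
    ← ofReal_integral_eq_lintegral_ofReal hint
      ((ae_restrict_mem measurableSet_Ioo).mono fun u hu => rpow_nonneg (by linarith [hu.2]) _),
    ← integral_Ioc_eq_integral_Ioo, ← intervalIntegral.integral_of_le hs,
    intervalIntegral.integral_comp_sub_left (fun x => x ^ (-(1 / 2) : ℝ)),
    integral_rpow (Or.inl (by norm_num))]
  congr 1
  norm_num [sqrt_eq_rpow]
  ring

theorem lintegral_Ioi_pow_three_mul_exp_neg_mul_sq {b : ℝ} (hb : 0 < b) :
    ∫⁻ x in Ioi 0, ENNReal.ofReal (x ^ 3 * exp (-b * x ^ 2)) = ENNReal.ofReal ((b ^ 2)⁻¹ / 2) := by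
  have hcast : ∀ x ∈ Ioi (0 : ℝ),
      x ^ (3 : ℝ) * exp (-b * x ^ (2 : ℝ)) = x ^ 3 * exp (-b * x ^ 2) := fun x _ => by
    norm_cast
  rw [← ofReal_integral_eq_lintegral_ofReal
      ((integrableOn_rpow_mul_exp_neg_mul_sq hb (s := 3) (by norm_num)).congr_fun
        (fun x _ => by norm_cast) measurableSet_Ioi)
      ((ae_restrict_mem measurableSet_Ioi).mono fun x (hx : 0 < x) => by positivity),
    ← setIntegral_congr_fun measurableSet_Ioi hcast,
    integral_rpow_mul_exp_neg_mul_rpow (by norm_num) (by norm_num) hb]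
  norm_num [Real.Gamma_two, div_eq_mul_inv]

theorem lintegral_lintegral_swap_two_mul_arsinh_sqrt {F : ℝ → ℝ → ℝ≥0∞}
    (hF : Measurable (Function.uncurry F)) :
    ∫⁻ u in Ioi 0, ∫⁻ v in Ioi (2 * arsinh √u), F u v =
      ∫⁻ v in Ioi 0, ∫⁻ u in Ioo 0 (sinh (v / 2) ^ 2), F u v := by
  set R : Set (ℝ × ℝ) := {p | 0 < p.2 ∧ p.1 < sinh (p.2 / 2) ^ 2}
  have hR : MeasurableSet R :=
    (measurableSet_lt measurable_const measurable_snd).inter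
      (measurableSet_lt measurable_fst (by fun_prop))
  have hG : Measurable (R.indicator (Function.uncurry F)) := hF.indicator hR
  calc ∫⁻ u in Ioi 0, ∫⁻ v in Ioi (2 * arsinh √u), F u v
      = ∫⁻ u in Ioi 0, ∫⁻ v, R.indicator (Function.uncurry F) (u, v) := by
        refine lintegral_congr fun u => ?_
        rw [← lintegral_indicator measurableSet_Ioi]
        refine lintegral_congr fun v => ?_
        simp only [indicator_apply, mem_Ioi, two_mul_arsinh_sqrt_lt_iff, R, mem_ofPred_eq,
          Function.uncurry_apply_pair]
    _ = ∫⁻ v, ∫⁻ u in Ioi 0, R.indicator (Function.uncurry F) (u, v) :=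
        lintegral_lintegral_swap hG.aemeasurable
    _ = ∫⁻ v in Ioi 0, ∫⁻ u in Ioo 0 (sinh (v / 2) ^ 2), F u v := by
        rw [← lintegral_indicator measurableSet_Ioi]
        refine lintegral_congr fun v => ?_
        by_cases hv : 0 < v
        · rw [indicator_of_mem (mem_Ioi.2 hv), ← Ioi_inter_Iio, inter_comm,
            ← Measure.restrict_restrict measurableSet_Iio, ← lintegral_indicator measurableSet_Iio]
          simp only [indicator_apply, R, mem_ofPred_eq, hv, true_and, mem_Iio,
            Function.uncurry_apply_pair]
        · simp [R, hv]

theorem lintegral_lintegral_mul_arsinh_sqrt_le {f : ℝ → ℝ≥0∞} (hf : Measurable f) :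
    ∫⁻ u in Ioi 0, (∫⁻ v in Ioi (2 * arsinh √u),
        f v * ENNReal.ofReal (√(sinh (v / 2) ^ 2 - u))⁻¹) * ENNReal.ofReal (arsinh √u) ≤
      ∫⁻ v in Ioi 0, f v * ENNReal.ofReal (v * sinh (v / 2)) := by
  set F : ℝ → ℝ → ℝ≥0∞ := fun u v =>
    ENNReal.ofReal (v / 2) * f v * ENNReal.ofReal (√(sinh (v / 2) ^ 2 - u))⁻¹
  have hF : Measurable (Function.uncurry F) := by
    unfold F Function.uncurry
    fun_prop
  calc _ ≤ ∫⁻ u in Ioi 0, ∫⁻ v in Ioi (2 * arsinh √u), F u v := by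
        refine lintegral_mono fun u => ?_
        rw [mul_comm, ← lintegral_const_mul' _ _ ENNReal.ofReal_ne_top]
        refine setLIntegral_mono (hF.comp measurable_prodMk_left) fun v hv => ?_
        rw [← mul_assoc]
        dsimp only [F]
        gcongr
        linarith [mem_Ioi.1 hv]
    _ = ∫⁻ v in Ioi 0, ∫⁻ u in Ioo 0 (sinh (v / 2) ^ 2), F u v :=
        lintegral_lintegral_swap_two_mul_arsinh_sqrt hF
    _ = ∫⁻ v in Ioi 0, f v * ENNReal.ofReal (v * sinh (v / 2)) := by
        refine setLIntegral_congr_fun measurableSet_Ioi fun v hv => ?_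
        have hsinh : 0 ≤ sinh (v / 2) := sinh_nonneg_iff.2 (by linarith [mem_Ioi.1 hv])
        rw [lintegral_const_mul _ (by fun_prop), lintegral_Ioo_inv_sqrt_sub (by positivity),
          sqrt_sq hsinh, mul_comm (ENNReal.ofReal _) (f v), mul_assoc,
          ← ENNReal.ofReal_mul (by linarith [mem_Ioi.1 hv])]
        ring_nf

theorem lintegral_Ioi_mul_exp_neg_mul_sq_mul_sinh_le {T : ℝ} (hT : 1 ≤ T) :
    ∫⁻ v in Ioi 0, ENNReal.ofReal (v * exp (-(T ^ 2 * v ^ 2 / 2))) *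
      ENNReal.ofReal (v * sinh (v / 2)) ≤ ENNReal.ofReal (4 / T ^ 4) := by
  have hT2 : 1 ≤ T ^ 2 := one_le_pow₀ hT
  calc _ ≤ ∫⁻ v in Ioi 0, ENNReal.ofReal (2⁻¹ * (v ^ 3 * exp (-(T ^ 2 / 4) * v ^ 2))) := by
        refine setLIntegral_mono (by fun_prop) fun v (hv : 0 < v) => ?_
        rw [← ENNReal.ofReal_mul (by positivity)]
        refine ENNReal.ofReal_le_ofReal ?_
        have hsinh : sinh (v / 2) ≤ v / 2 * exp ((v / 2) ^ 2 / 2) :=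
          (sinh_le_mul_cosh (by positivity)).trans (by gcongr; exact cosh_le_exp_half_sq _)
        have hexp :
            exp (-(T ^ 2 * v ^ 2 / 2)) * exp ((v / 2) ^ 2 / 2) ≤ exp (-(T ^ 2 / 4) * v ^ 2) := by
          rw [← exp_add]
          gcongr
          nlinarith [mul_le_mul_of_nonneg_right hT2 (sq_nonneg v)]
        calc v * exp (-(T ^ 2 * v ^ 2 / 2)) * (v * sinh (v / 2))
            ≤ v * exp (-(T ^ 2 * v ^ 2 / 2)) * (v * (v / 2 * exp ((v / 2) ^ 2 / 2))) := by gcongr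
          _ = 2⁻¹ * (v ^ 3 * (exp (-(T ^ 2 * v ^ 2 / 2)) * exp ((v / 2) ^ 2 / 2))) := by ring
          _ ≤ 2⁻¹ * (v ^ 3 * exp (-(T ^ 2 / 4) * v ^ 2)) := by gcongr
    _ = ENNReal.ofReal 2⁻¹ * ENNReal.ofReal (((T ^ 2 / 4) ^ 2)⁻¹ / 2) := by
        simp_rw [ENNReal.ofReal_mul (by norm_num : (0 : ℝ) ≤ 2⁻¹)]
        rw [lintegral_const_mul' _ _ ENNReal.ofReal_ne_top,
          lintegral_Ioi_pow_three_mul_exp_neg_mul_sq (by positivity)]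
    _ = ENNReal.ofReal (4 / T ^ 4) := by
        rw [← ENNReal.ofReal_mul (by norm_num)]
        congr 1
        field_simp
        norm_num

/-- `k_T(u) ≥ 0` for all `u > 0`, and there is a constant `C > 0` such that for all `T ≥ 1`,
`∫₀^∞ k_T(u) arsinh(√u) du ≤ C / T`. -/
theorem stmt4 :
    (∀ T : ℝ, 1 ≤ T → ∀ u : ℝ, 0 < u → 0 ≤ kT T u) ∧
      ∃ C > (0:ℝ), ∀ T : ℝ, 1 ≤ T →
        (∫⁻ u in Set.Ioi (0:ℝ), kT T u * ENNReal.ofReal (Real.arsinh (Real.sqrt u))) ≤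
          ENNReal.ofReal (C / T) := by
  refine ⟨fun _ _ _ _ => zero_le, (√2 * π ^ ((3 : ℝ) / 2))⁻¹, by positivity, fun T hT => ?_⟩
  set c := T ^ 3 * exp (-(1 / (8 * T ^ 2))) / (4 * √2 * π ^ ((3 : ℝ) / 2))
  have hkT : ∀ u, kT T u = ENNReal.ofReal c * ∫⁻ v in Ioi (2 * arsinh √u),
      ENNReal.ofReal (v * exp (-(T ^ 2 * v ^ 2 / 2))) *
        ENNReal.ofReal (√(sinh (v / 2) ^ 2 - u))⁻¹ := fun u => by
    simp only [kT, ← ENNReal.ofReal_mul' (inv_nonneg.2 (sqrt_nonneg _))]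
    rfl
  have hc : c * (4 / T ^ 4) = exp (-(1 / (8 * T ^ 2))) * ((√2 * π ^ ((3 : ℝ) / 2))⁻¹ / T) := by
    have : 0 < T := by linarith
    simp only [c]
    field_simp
  calc _ = ENNReal.ofReal c * ∫⁻ u in Ioi 0, (∫⁻ v in Ioi (2 * arsinh √u),
          ENNReal.ofReal (v * exp (-(T ^ 2 * v ^ 2 / 2))) *
            ENNReal.ofReal (√(sinh (v / 2) ^ 2 - u))⁻¹) * ENNReal.ofReal (arsinh √u) := by
        simp_rw [hkT, mul_assoc]
        exact lintegral_const_mul' _ _ ENNReal.ofReal_ne_top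
    _ ≤ ENNReal.ofReal c * ENNReal.ofReal (4 / T ^ 4) := by
        gcongr
        exact (lintegral_lintegral_mul_arsinh_sqrt_le (by fun_prop)).trans
          (lintegral_Ioi_mul_exp_neg_mul_sq_mul_sinh_le hT)
    _ ≤ ENNReal.ofReal ((√2 * π ^ ((3 : ℝ) / 2))⁻¹ / T) := by
        rw [← ENNReal.ofReal_mul (by positivity), hc]
        refine ENNReal.ofReal_le_ofReal (mul_le_of_le_one_left (by positivity) ?_)
        exact exp_le_one_iff.2 (neg_nonpos.2 (by positivity))
end

section
/- There exists a constant C > 0 such that for all real t, |Γ(1/4 + it/2)|⁴ / |Γ(1/2 + it)|² ≤ C / (1 + |t|), where Γ denotes the complex Gamma function. -/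
/-!
By the duplication formula and the beta integral, `Γ(s)² = 2^(1-2s) Γ(2s) B(s, 1/2)` for
`0 < Re s`, so at `s = 1/4 + it/2` the quotient equals `2 |B(s, 1/2)|²`. On a vertical line the
beta integral `B(s, 1/2) = ∫₀¹ x^(s-1) (1-x)^(-1/2) dx` is bounded, and for `|s| ≥ 2` it is
`O(|s|^(-1/2))`: split at `b = 1 - 1/|s|`; on `[0, b]` integrating `x^(s-1)` by parts gains a
factor `1/|s|` against `(1-b)^(-1/2) = |s|^(1/2)`, while `[b, 1]` is an interval of length
`1/|s|` carrying only the integrable singularity `(1-x)^(-1/2)`.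
-/

open MeasureTheory Set intervalIntegral
open scoped Interval

theorem Real.rpow_le_two_of_half_le {x r : ℝ} (hx : 1 / 2 ≤ x) (hr₀ : -1 ≤ r)
    (hr₁ : r ≤ 0) :
    x ^ r ≤ 2 := calc
  x ^ r ≤ (1 / 2) ^ r := Real.rpow_le_rpow_of_nonpos (by norm_num) hx hr₁
  _ ≤ (1 / 2) ^ (-1 : ℝ) := Real.rpow_le_rpow_of_exponent_ge (by norm_num) (by norm_num) hr₀
  _ = 2 := by norm_num

theorem Real.hasDerivAt_one_sub_rpow_neg_half {x : ℝ} (hx : x < 1) :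
    HasDerivAt (fun y : ℝ => (1 - y) ^ (-(1 / 2) : ℝ)) ((1 - x) ^ (-(3 / 2) : ℝ) / 2) x := by
  convert ((hasDerivAt_id x).const_sub 1).rpow_const (p := -(1 / 2)) (Or.inl (sub_pos.2 hx).ne')
    using 1
  simp only [id]
  norm_num
  ring

theorem Real.continuousOn_one_sub_rpow (r : ℝ) {b : ℝ} (hb : b < 1) :
    ContinuousOn (fun y : ℝ => (1 - y) ^ r) (Iic b) := fun _ hx =>
  ((continuous_const.sub continuous_id).continuousAt.rpow_const
    (Or.inl (sub_pos.2 (lt_of_le_of_lt hx hb)).ne')).continuousWithinAt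

namespace Complex

theorem Gamma_sq_eq_mul_betaIntegral_one_half {s : ℂ} (hs : 0 < s.re) :
    Gamma s ^ 2 = 2 ^ (1 - 2 * s) * Gamma (2 * s) * betaIntegral s (1 / 2) := by
  have hΓ : Gamma (1 / 2) = ↑(√Real.pi) := by
    rw [← ofReal_one, ← ofReal_ofNat, ← ofReal_div, Gamma_ofReal, Real.Gamma_one_half_eq]
  have hhalf : 0 < (1 / 2 : ℂ).re := by norm_num
  apply mul_right_cancel₀ (Gamma_ne_zero_of_re_pos hhalf)
  linear_combination Gamma s * Gamma_mul_Gamma_eq_betaIntegral hs hhalf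
    + betaIntegral s (1 / 2) * Gamma_mul_Gamma_add_half s
    - 2 ^ (1 - 2 * s) * Gamma (2 * s) * betaIntegral s (1 / 2) * hΓ

theorem norm_Gamma_pow_four_div_norm_Gamma_two_mul_sq {s : ℂ} (hs : 0 < s.re) :
    ‖Gamma s‖ ^ 4 / ‖Gamma (2 * s)‖ ^ 2 =
      (2 : ℝ) ^ (2 - 4 * s.re) * ‖betaIntegral s (1 / 2)‖ ^ 2 := by
  have h2s : Gamma (2 * s) ≠ 0 := Gamma_ne_zero_of_re_pos (by simpa using hs)
  have hnorm : ‖(2 : ℂ) ^ (1 - 2 * s)‖ ^ 2 = (2 : ℝ) ^ (2 - 4 * s.re) := by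
    rw [← ofReal_ofNat, norm_cpow_eq_rpow_re_of_pos two_pos,
      ← Real.rpow_mul_natCast zero_le_two]
    congr 1
    simp
    ring
  rw [div_eq_iff (by positivity), ← hnorm, show ‖Gamma s‖ ^ 4 = ‖Gamma s ^ 2‖ ^ 2 by
    rw [norm_pow]; ring, Gamma_sq_eq_mul_betaIntegral_one_half hs, norm_mul, norm_mul]
  ring

noncomputable def betaIntegrand (s u : ℂ) (x : ℝ) : ℂ :=
  (x : ℂ) ^ (s - 1) * (1 - (x : ℂ)) ^ (u - 1)

theorem norm_betaIntegrand {s u : ℂ} {x : ℝ} (hx : x ∈ Ioo 0 1) :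
    ‖betaIntegrand s u x‖ = x ^ (s.re - 1) * (1 - x) ^ (u.re - 1) := by
  rw [betaIntegrand, norm_mul, norm_cpow_eq_rpow_re_of_pos hx.1, ← ofReal_one, ← ofReal_sub,
    norm_cpow_eq_rpow_re_of_pos (sub_pos.2 hx.2)]
  simp

theorem norm_betaIntegral_le_integral (s u : ℂ) :
    ‖betaIntegral s u‖ ≤ ∫ x in (0 : ℝ)..1, x ^ (s.re - 1) * (1 - x) ^ (u.re - 1) := by
  refine (intervalIntegral.norm_integral_le_integral_norm zero_le_one).trans_eq
    (integral_congr_ae ?_)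
  filter_upwards [volume.ae_ne 1] with x hx1 hx
  rw [uIoc_of_le zero_le_one] at hx
  exact norm_betaIntegrand ⟨hx.1, lt_of_le_of_ne hx.2 hx1⟩

theorem norm_integral_betaIntegrand_one_half_le_of_half_le {s : ℂ} (hs₀ : 0 ≤ s.re)
    (hs₁ : s.re ≤ 1) {b : ℝ} (hb : 1 / 2 ≤ b) (hb₁ : b ≤ 1) :
    ‖∫ x in b..1, betaIntegrand s (1 / 2) x‖ ≤ 4 * √(1 - b) := by
  have hint : IntervalIntegrable (fun x : ℝ => 2 * (1 - x) ^ (-(1 / 2) : ℝ)) volume b 1 := by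
    simpa using ((intervalIntegrable_rpow' (a := 1 - b) (b := 0) (r := -(1 / 2))
      (by norm_num)).comp_sub_left 1).const_mul 2
  have hval : ∫ x in b..1, 2 * (1 - x) ^ (-(1 / 2) : ℝ) = 4 * √(1 - b) := by
    rw [intervalIntegral.integral_const_mul,
      integral_comp_sub_left (fun x : ℝ => x ^ (-(1 / 2) : ℝ)) 1, sub_self,
      integral_rpow (Or.inl (by norm_num)), Real.sqrt_eq_rpow]
    norm_num
    ring
  refine (norm_integral_le_of_norm_le hb₁ ?_ hint).trans_eq hval
  filter_upwards [volume.ae_ne 1] with x hx1 hx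
  rw [norm_betaIntegrand ⟨by linarith [hx.1], lt_of_le_of_ne hx.2 hx1⟩]
  have : x ^ (s.re - 1) ≤ 2 :=
    Real.rpow_le_two_of_half_le (by linarith [hx.1]) (by linarith) (by linarith)
  norm_num
  exact mul_le_mul_of_nonneg_right this (Real.rpow_nonneg (by linarith [hx.2]) _)

theorem norm_ofReal_cpow_div_self_le {s : ℂ} (hs : 0 < s.re) {x : ℝ} (hx₀ : 0 ≤ x)
    (hx₁ : x ≤ 1) :
    ‖(x : ℂ) ^ s / s‖ ≤ ‖s‖⁻¹ := by
  rw [norm_div, norm_cpow_eq_rpow_re_of_nonneg hx₀ hs.ne', div_eq_mul_inv]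
  exact mul_le_of_le_one_left (by positivity) (Real.rpow_le_one hx₀ hx₁ hs.le)

theorem integral_betaIntegrand_one_half_eq {s : ℂ} (hs : 0 < s.re) {b : ℝ} (hb₀ : 0 ≤ b)
    (hb₁ : b < 1) :
    ∫ x in (0 : ℝ)..b, betaIntegrand s (1 / 2) x =
      ((1 - b) ^ (-(1 / 2) : ℝ) : ℝ) * (b ^ s / s) -
        ∫ x in (0 : ℝ)..b, ((1 - x) ^ (-(3 / 2) : ℝ) / 2 : ℝ) * (x ^ s / s) := by
  have hs₀ : s ≠ 0 := fun h => by simp [h] at hs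
  have hmem : ∀ x ∈ [[0, b]], x ∈ Icc 0 b := fun x hx => by rwa [uIcc_of_le hb₀] at hx
  set u : ℝ → ℂ := fun x => (((1 - x) ^ (-(1 / 2) : ℝ) : ℝ) : ℂ)
  set u' : ℝ → ℂ := fun x => (((1 - x) ^ (-(3 / 2) : ℝ) / 2 : ℝ) : ℂ)
  have hu : ∀ x ∈ [[0, b]], HasDerivAt u (u' x) x := fun x hx =>
    (Real.hasDerivAt_one_sub_rpow_neg_half (by linarith [(hmem x hx).2])).ofReal_comp
  have hv : ∀ x ∈ Ioo (min 0 b) (max 0 b),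
      HasDerivAt (fun x : ℝ => (x : ℂ) ^ s / s) ((x : ℂ) ^ (s - 1)) x := fun x hx => by
    rw [min_eq_left hb₀] at hx
    simpa using hasDerivAt_ofReal_cpow_const' hx.1.ne' (r := s - 1) (by simpa using hs₀)
  have hv_cont : ContinuousOn (fun x : ℝ => (x : ℂ) ^ s / s) [[0, b]] := fun x _ =>
    ((continuousAt_ofReal_cpow_const x s (Or.inl hs)).div_const s).continuousWithinAt
  have hu' : IntervalIntegrable u' volume 0 b :=
    (continuous_ofReal.comp_continuousOn
      (((Real.continuousOn_one_sub_rpow _ hb₁).div_const 2).mono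
        fun x hx => (hmem x hx).2)).intervalIntegrable
  have hv' : IntervalIntegrable (fun x : ℝ => (x : ℂ) ^ (s - 1)) volume 0 b :=
    intervalIntegrable_cpow' (by simpa using hs)
  rw [integral_congr (g := fun x => u x * (x : ℂ) ^ (s - 1)) ?_,
    integral_mul_deriv_eq_deriv_mul_of_hasDerivAt (HasDerivAt.continuousOn hu) hv_cont
      (fun x hx => hu x (Ioo_subset_Icc_self hx)) hv hu' hv']
  · simp [u, u', zero_cpow hs₀]
  · intro x hx
    simp only [betaIntegrand, u, ofReal_cpow (show 0 ≤ 1 - x by linarith [(hmem x hx).2])]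
    push_cast
    ring_nf

theorem norm_integral_betaIntegrand_one_half_le_of_lt_one {s : ℂ} (hs : 0 < s.re)
    {b : ℝ} (hb₀ : 0 ≤ b) (hb₁ : b < 1) :
    ‖∫ x in (0 : ℝ)..b, betaIntegrand s (1 / 2) x‖ ≤ 2 / (√(1 - b) * ‖s‖) := by
  set g : ℝ → ℝ := fun y => (1 - y) ^ (-(1 / 2) : ℝ)
  set g' : ℝ → ℝ := fun y => (1 - y) ^ (-(3 / 2) : ℝ) / 2
  have hmem : ∀ x ∈ [[0, b]], x ∈ Icc 0 b := fun x hx => by rwa [uIcc_of_le hb₀] at hx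
  have hg : ∀ x ∈ [[0, b]], HasDerivAt g (g' x) x := fun x hx =>
    Real.hasDerivAt_one_sub_rpow_neg_half (by linarith [(hmem x hx).2])
  have hg'int : IntervalIntegrable g' volume 0 b :=
    (((Real.continuousOn_one_sub_rpow _ hb₁).div_const 2).mono
      fun x hx => (hmem x hx).2).intervalIntegrable
  have hg₀ : 0 ≤ g b := Real.rpow_nonneg (by linarith) _
  have hboundary : ‖(g b : ℂ) * (b ^ s / s)‖ ≤ g b / ‖s‖ := by
    rw [norm_mul, norm_real, Real.norm_of_nonneg hg₀, div_eq_mul_inv]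
    exact mul_le_mul_of_nonneg_left (norm_ofReal_cpow_div_self_le hs hb₀ hb₁.le) hg₀
  have hinterior : ‖∫ x in (0 : ℝ)..b, (g' x : ℂ) * (x ^ s / s)‖ ≤ g b / ‖s‖ := calc
    _ ≤ ∫ x in (0 : ℝ)..b, g' x / ‖s‖ := by
      refine norm_integral_le_of_norm_le hb₀ (ae_of_all _ fun x hx => ?_) (hg'int.div_const _)
      have hg'₀ : 0 ≤ g' x := div_nonneg (Real.rpow_nonneg (by linarith [hx.2]) _) zero_le_two
      rw [norm_mul, norm_real, Real.norm_of_nonneg hg'₀, div_eq_mul_inv]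
      exact mul_le_mul_of_nonneg_left
        (norm_ofReal_cpow_div_self_le hs hx.1.le (by linarith [hx.2])) hg'₀
    _ = (g b - g 0) / ‖s‖ := by
      rw [intervalIntegral.integral_div, integral_eq_sub_of_hasDerivAt hg hg'int]
    _ ≤ g b / ‖s‖ := by gcongr; simp [g]
  have hgb : g b = (√(1 - b))⁻¹ := by
    simp only [g, Real.sqrt_eq_rpow, Real.rpow_neg (sub_nonneg.2 hb₁.le)]
  calc _ ≤ g b / ‖s‖ + g b / ‖s‖ := by
        rw [integral_betaIntegrand_one_half_eq hs hb₀ hb₁]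
        exact (norm_sub_le _ _).trans (add_le_add hboundary hinterior)
    _ = 2 / (√(1 - b) * ‖s‖) := by rw [hgb]; field_simp; ring

theorem norm_betaIntegral_one_half_le {s : ℂ} (hs₀ : 0 < s.re) (hs₁ : s.re ≤ 1)
    (hs : 2 ≤ ‖s‖) :
    ‖betaIntegral s (1 / 2)‖ ≤ 6 / √‖s‖ := by
  set b := 1 - ‖s‖⁻¹
  have h1b : 1 - b = ‖s‖⁻¹ := by ring
  have hinv : ‖s‖⁻¹ ≤ 1 / 2 := by rw [one_div]; exact inv_anti₀ two_pos hs
  have hb₀ : 1 / 2 ≤ b := by linarith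
  have hb₁ : b < 1 := sub_lt_self 1 (by positivity)
  have hint : IntervalIntegrable (betaIntegrand s (1 / 2)) volume 0 1 :=
    betaIntegral_convergent hs₀ (by norm_num)
  have hbI : b ∈ [[(0 : ℝ), 1]] := by rw [uIcc_of_le zero_le_one]; constructor <;> linarith
  have hsplit : betaIntegral s (1 / 2) =
      (∫ x in (0 : ℝ)..b, betaIntegrand s (1 / 2) x) +
        ∫ x in b..1, betaIntegrand s (1 / 2) x :=
    (integral_add_adjacent_intervals (hint.mono_set (uIcc_subset_uIcc left_mem_uIcc hbI))
      (hint.mono_set (uIcc_subset_uIcc hbI right_mem_uIcc))).symm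
  calc ‖betaIntegral s (1 / 2)‖ ≤ 2 / (√(1 - b) * ‖s‖) + 4 * √(1 - b) := by
        rw [hsplit]
        exact (norm_add_le _ _).trans (add_le_add
          (norm_integral_betaIntegrand_one_half_le_of_lt_one hs₀ (by linarith) hb₁)
          (norm_integral_betaIntegrand_one_half_le_of_half_le hs₀.le hs₁ hb₀ hb₁.le))
    _ = 6 / √‖s‖ := by
        have hpos : 0 < √‖s‖ := Real.sqrt_pos.2 (by linarith)
        rw [h1b, Real.sqrt_inv]
        field_simp
        linear_combination 2 * Real.sq_sqrt (norm_nonneg s)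

theorem exists_sq_norm_betaIntegral_one_half_le {σ : ℝ} (hσ₀ : 0 < σ) (hσ₁ : σ ≤ 1) :
    ∃ K > 0, ∀ s : ℂ, s.re = σ →
      ‖betaIntegral s (1 / 2)‖ ^ 2 ≤ K / (1 + ‖s‖) := by
  set K₀ := ∫ x in (0 : ℝ)..1, x ^ (σ - 1) * (1 - x) ^ ((1 / 2 : ℂ).re - 1)
  refine ⟨3 * K₀ ^ 2 + 54, by positivity, fun s hs => ?_⟩
  rw [le_div_iff₀ (by positivity)]
  have hB := norm_nonneg (betaIntegral s (1 / 2))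
  rcases le_or_gt 2 ‖s‖ with hlarge | hsmall
  · have h := norm_betaIntegral_one_half_le (hs ▸ hσ₀) (hs ▸ hσ₁) hlarge
    rw [le_div_iff₀ (Real.sqrt_pos.2 (by linarith))] at h
    have hsq : ‖betaIntegral s (1 / 2)‖ ^ 2 * ‖s‖ ≤ 36 := calc
      _ = (‖betaIntegral s (1 / 2)‖ * √‖s‖) ^ 2 := by
        rw [mul_pow, Real.sq_sqrt (norm_nonneg s)]
      _ ≤ 6 ^ 2 := pow_le_pow_left₀ (by positivity) h 2
      _ = 36 := by norm_num
    nlinarith [sq_nonneg K₀]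
  · have h := norm_betaIntegral_le_integral s (1 / 2)
    rw [hs] at h
    nlinarith [norm_nonneg s]

end Complex

/-- There is a constant `C > 0` such that for all real `t`,
`|Γ(1/4 + it/2)|⁴ / |Γ(1/2 + it)|² ≤ C / (1 + |t|)`. -/
theorem stmt12 :
    ∃ C > (0:ℝ), ∀ t : ℝ,
      ‖Complex.Gamma (1 / 4 + (t / 2 : ℝ) * Complex.I)‖ ^ 4 /
          ‖Complex.Gamma (1 / 2 + (t : ℝ) * Complex.I)‖ ^ 2 ≤
        C / (1 + |t|) := by
  obtain ⟨K, hK, hbound⟩ :=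
    Complex.exists_sq_norm_betaIntegral_one_half_le (σ := 1 / 4) (by norm_num) (by norm_num)
  refine ⟨4 * K, by positivity, fun t => ?_⟩
  set s : ℂ := 1 / 4 + (t / 2 : ℝ) * Complex.I
  have hs : s.re = 1 / 4 := by simp [s]
  have h2s : 1 / 2 + (t : ℂ) * Complex.I = 2 * s := by simp only [s]; push_cast; ring
  have hts : |t| / 2 ≤ ‖s‖ := by simpa [s, abs_div] using Complex.abs_im_le_norm s
  rw [h2s, Complex.norm_Gamma_pow_four_div_norm_Gamma_two_mul_sq (by rw [hs]; norm_num), hs]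
  calc (2 : ℝ) ^ (2 - 4 * (1 / 4 : ℝ)) * ‖Complex.betaIntegral s (1 / 2)‖ ^ 2
      = 2 * ‖Complex.betaIntegral s (1 / 2)‖ ^ 2 := by norm_num
    _ ≤ 2 * (K / (1 + ‖s‖)) := by gcongr; exact hbound s hs
    _ ≤ 4 * K / (1 + |t|) := by
        rw [← mul_div_assoc, div_le_div_iff₀ (by positivity) (by positivity)]
        nlinarith
end
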